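/- arXiv:math/0510470 — 4 statements merged into one kernel-verified Lean document; each statement's English description precedes it below -/
import Mathlib

section
/- Let P be a full-dimensional perfectly centered polytope in ℝ^d. A subset H of P + P* is a nontrivial face of P + P* if and only if H = G + F^D for some nontrivial faces G and F of P with G ⊆ F. -/
open Pointwise RealInnerProductSpace

noncomputable section

abbrev E (d : ℕ) : Type := EuclideanSpace ℝ (Fin d)

def IsPolytope {d : ℕ} (P : Set (E d)) : Prop :=
  ∃ V : Finset (E d), V.Nonempty ∧ P = convexHull ℝ (V : Set (E d))

def maximizers {d : ℕ} (P : Set (E d)) (c : E d) : Set (E d) :=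
  {x ∈ P | ∀ y ∈ P, ⟪y, c⟫ ≤ ⟪x, c⟫}

def IsFace {d : ℕ} (P F : Set (E d)) : Prop :=
  F = ∅ ∨ F = P ∨ ∃ c : E d, c ≠ 0 ∧ F = maximizers P c

def IsNontrivialFace {d : ℕ} (P F : Set (E d)) : Prop :=
  IsFace P F ∧ F ≠ ∅ ∧ F ≠ P

def polarDual {d : ℕ} (P : Set (E d)) : Set (E d) :=
  {x | ∀ y ∈ P, ⟪x, y⟫ ≤ 1}

def dualFace {d : ℕ} (P F : Set (E d)) : Set (E d) :=
  {x ∈ polarDual P | ∀ f ∈ F, ⟪x, f⟫ = 1}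

def normalCone {d : ℕ} (P F : Set (E d)) : Set (E d) :=
  {c | maximizers P c = F}

def IsPerfectlyCentered {d : ℕ} (P : Set (E d)) : Prop :=
  ∀ F : Set (E d), IsFace P F → F.Nonempty →
    (intrinsicInterior ℝ F ∩ normalCone P F).Nonempty

def dimSet {d : ℕ} (F : Set (E d)) : ℕ :=
  Module.finrank ℝ (affineSpan ℝ F).direction

def fVec {d : ℕ} (P : Set (E d)) (k : ℕ) : ℕ :=
  {F : Set (E d) | IsFace P F ∧ F.Nonempty ∧ dimSet F = k}.ncard

/-!
Write `S(K;c)` for `maximizers K c`. Since `S(P + P*; c) = S(P;c) + S(P*;c)`, everything comes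
down to computing `S(P*;c)`: if `τ • c` is the point where the ray through `c` leaves `P` and `F`
is the smallest face of `P` containing it, then `S(P*;c) = F^D`. Perfect centering
enters through a single consequence: when every face `F` contains a point `u` with `S(P;u) = F`,
every `z ∈ F` satisfies `S(P;z) ⊆ F`. Applied to `z = τ • c` this gives `S(P;c) ⊆ F`; conversely,
for nontrivial faces `G ⊆ F` with such points `uG` and `uF`, the functional `uG + uF` exposes
`G + F^D`.
-/

open Topology

variable {d : ℕ}

lemma isNontrivialFace_iff {K F : Set (E d)} :
    IsNontrivialFace K F ↔ (∃ c, F = maximizers K c) ∧ F.Nonempty ∧ F ≠ K := by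
  refine ⟨?_, fun ⟨⟨c, hc⟩, hne, hK⟩ => ?_⟩
  · rintro ⟨hF | hF | ⟨c, -, hc⟩, hne, hK⟩
    exacts [absurd hF hne, absurd hF hK, ⟨⟨c, hc⟩, Set.nonempty_iff_ne_empty.2 hne, hK⟩]
  refine ⟨Or.inr (Or.inr ⟨c, ?_, hc⟩), hne.ne_empty, hK⟩
  rintro rfl
  exact hK (hc.trans (by simp [maximizers]))

lemma maximizers_zero (K : Set (E d)) : maximizers K 0 = K := by
  simp [maximizers]

lemma maximizers_subset (K : Set (E d)) (c : E d) : maximizers K c ⊆ K :=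
  fun _ hx => hx.1

lemma isExposed_maximizers (K : Set (E d)) (c : E d) : IsExposed ℝ K (maximizers K c) :=
  fun _ => ⟨innerSL ℝ c, by ext; simp [maximizers, real_inner_comm c]⟩

lemma IsCompact.maximizers_nonempty {K : Set (E d)} (hK : IsCompact K) (hne : K.Nonempty)
    (c : E d) : (maximizers K c).Nonempty := by
  obtain ⟨x, hx, hmax⟩ := hK.exists_isMaxOn hne (f := fun y => ⟪y, c⟫) (by fun_prop)
  exact ⟨x, hx, hmax⟩

lemma maximizers_subset_maximizers_smul (K : Set (E d)) (c : E d) {t : ℝ} (ht : 0 ≤ t) :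
    maximizers K c ⊆ maximizers K (t • c) := fun x ⟨hx, hmax⟩ =>
  ⟨hx, fun y hy => by
    simpa only [real_inner_smul_right] using mul_le_mul_of_nonneg_left (hmax y hy) ht⟩

lemma maximizers_smul (K : Set (E d)) (c : E d) {t : ℝ} (ht : 0 < t) :
    maximizers K (t • c) = maximizers K c := by
  refine (maximizers_subset_maximizers_smul K c ht.le).antisymm' ?_
  simpa [smul_smul, inv_mul_cancel₀ ht.ne'] using
    maximizers_subset_maximizers_smul K (t • c) (inv_nonneg.2 ht.le)

lemma maximizers_add_eq_inter {K : Set (E d)} {a b x : E d} (ha : x ∈ maximizers K a)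
    (hb : x ∈ maximizers K b) : maximizers K (a + b) = maximizers K a ∩ maximizers K b := by
  ext z
  simp only [maximizers, Set.mem_ofPred_eq, Set.mem_inter_iff, inner_add_right]
  refine ⟨fun ⟨hz, h⟩ => ?_,
    fun ⟨⟨hz, h₁⟩, _, h₂⟩ => ⟨hz, fun y hy => add_le_add (h₁ y hy) (h₂ y hy)⟩⟩
  have hx := h x ha.1
  have ea : ⟪z, a⟫ = ⟪x, a⟫ := by linarith [ha.2 z hz, hb.2 z hz]
  have eb : ⟪z, b⟫ = ⟪x, b⟫ := by linarith [ha.2 z hz, hb.2 z hz]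
  exact ⟨⟨hz, ea ▸ ha.2⟩, hz, eb ▸ hb.2⟩

lemma maximizers_set_add (A B : Set (E d)) (c : E d) :
    maximizers (A + B) c = maximizers A c + maximizers B c := by
  ext z
  constructor
  · rintro ⟨⟨a, ha, b, hb, rfl⟩, hmax⟩
    refine Set.add_mem_add ⟨ha, fun y hy => ?_⟩ ⟨hb, fun y hy => ?_⟩
    · simpa [inner_add_left] using hmax (y + b) (Set.add_mem_add hy hb)
    · simpa [inner_add_left] using hmax (a + y) (Set.add_mem_add ha hy)
  · rintro ⟨a, ⟨ha, hamax⟩, b, ⟨hb, hbmax⟩, rfl⟩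
    refine ⟨Set.add_mem_add ha hb, ?_⟩
    rintro _ ⟨a', ha', b', hb', rfl⟩
    simpa only [inner_add_left] using add_le_add (hamax a' ha') (hbmax b' hb')

lemma exists_pos_add_smul_mem {K : Set (E d)} {x : E d} (hx : x ∈ interior K) (c : E d) :
    ∃ t : ℝ, 0 < t ∧ x + t • c ∈ K := by
  have hmem : ∀ᶠ t in 𝓝 (0 : ℝ), x + t • c ∈ K := by
    refine (Continuous.tendsto (by fun_prop) 0).eventually ?_
    simpa using mem_interior_iff_mem_nhds.1 hx
  obtain ⟨t, ht, htpos⟩ := ((hmem.filter_mono nhdsWithin_le_nhds).and self_mem_nhdsWithin).exists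
    (f := 𝓝[>] (0 : ℝ))
  exact ⟨t, htpos, ht⟩

lemma eq_zero_of_mem_interior_of_mem_maximizers {K : Set (E d)} {x c : E d}
    (hx : x ∈ interior K) (hc : x ∈ maximizers K c) : c = 0 := by
  obtain ⟨t, htpos, ht⟩ := exists_pos_add_smul_mem hx c
  have hle := hc.2 _ ht
  rw [inner_add_left, real_inner_smul_left] at hle
  have hcc : ⟪c, c⟫ ≤ 0 := nonpos_of_mul_nonpos_right (by linarith) htpos
  exact inner_self_eq_zero.1 (le_antisymm hcc real_inner_self_nonneg)

lemma inner_eq_of_mem_maximizers {K : Set (E d)} {c x y : E d} (hx : x ∈ maximizers K c)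
    (hy : y ∈ maximizers K c) : ⟪x, c⟫ = ⟪y, c⟫ :=
  le_antisymm (hy.2 x hx.1) (hx.2 y hy.1)

lemma inner_lt_of_notMem_maximizers {K : Set (E d)} {c x y : E d} (hx : x ∈ maximizers K c)
    (hy : y ∈ K) (hyn : y ∉ maximizers K c) : ⟪y, c⟫ < ⟪x, c⟫ :=
  lt_of_not_ge fun h => hyn ⟨hy, fun z hz => (hx.2 z hz).trans h⟩

lemma maximizers_ne_self {K : Set (E d)} {x c : E d} (hx : x ∈ interior K) (hc : c ≠ 0) :
    maximizers K c ≠ K :=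
  fun h => hc (eq_zero_of_mem_interior_of_mem_maximizers hx (by rw [h]; exact interior_subset hx))

lemma IsCompact.exists_max_add_smul_mem {K : Set (E d)} (hK : IsCompact K) {x v : E d}
    (hx : x ∈ K) (hv : v ≠ 0) :
    ∃ τ : ℝ, 0 ≤ τ ∧ x + τ • v ∈ K ∧ ∀ t, τ < t → x + t • v ∉ K := by
  have hS : IsCompact (Set.Ici 0 ∩ (fun t : ℝ => x + t • v) ⁻¹' K) :=
    (((Homeomorph.addLeft x).isClosedEmbedding.comp
      (isClosedEmbedding_smul_left hv)).isCompact_preimage hK).inter_left isClosed_Ici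
  obtain ⟨τ, ⟨hτ0, hτK⟩, hτmax⟩ := hS.exists_isGreatest ⟨0, Set.self_mem_Ici, by simpa using hx⟩
  exact ⟨τ, hτ0, hτK, fun t ht htK => (hτmax ⟨hτ0.trans ht.le, htK⟩).not_gt ht⟩

lemma IsCompact.exists_pos_smul_mem {K : Set (E d)} (hK : IsCompact K)
    (h0 : (0 : E d) ∈ interior K) {c : E d} (hc : c ≠ 0) :
    ∃ τ : ℝ, 0 < τ ∧ τ • c ∈ K ∧ ∀ t, τ < t → t • c ∉ K := by
  obtain ⟨τ, -, hτ, hmax⟩ := hK.exists_max_add_smul_mem (interior_subset h0) hc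
  obtain ⟨s, hs, hsK⟩ := exists_pos_add_smul_mem h0 c
  simp only [zero_add] at hτ hmax hsK
  exact ⟨τ, hs.trans_le (not_lt.1 fun h => hmax s h hsK), hτ, hmax⟩

/-- The metric projection `v` of `q = r + t • (r - u)` onto `K` maximizes `q - v`; this face
cannot contain both `r` and `u`, since `q` is an affine combination of them. -/
lemma exists_maximizers_ne_near {K : Set (E d)} (hKc : IsClosed K) (hK : Convex ℝ K)
    {r u : E d} (hr : r ∈ K) (hu : u ∈ K) {t : ℝ} (hq : r + t • (r - u) ∉ K) :
    ∃ w v, v ∈ maximizers K w ∧ maximizers K w ≠ K ∧ ‖v - r‖ ≤ 2 * ‖t • (r - u)‖ := by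
  set q := r + t • (r - u) with hq_def
  obtain ⟨v, hvK, hv⟩ := exists_norm_eq_iInf_of_complete_convex ⟨r, hr⟩ hKc.isComplete hK q
  have hsep := (norm_eq_iInf_iff_real_inner_le_zero hK hvK).1 hv
  have hvmax : v ∈ maximizers K (q - v) := ⟨hvK, fun y hy => by
    have := hsep y hy
    rw [inner_sub_right, real_inner_comm y, real_inner_comm v] at this
    linarith⟩
  refine ⟨q - v, v, hvmax, fun hall => ?_, ?_⟩
  · have hval : ∀ y ∈ K, ⟪y, q - v⟫ = ⟪v, q - v⟫ := fun y hy =>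
      le_antisymm (hvmax.2 y hy) ((hall.symm ▸ hy : y ∈ maximizers K (q - v)).2 v hvK)
    have hqv : ⟪q - v, q - v⟫ = 0 := by
      rw [inner_sub_left, hq_def, inner_add_left, real_inner_smul_left, inner_sub_left,
        hval r hr, hval u hu]
      ring
    exact hq (sub_eq_zero.1 (inner_self_eq_zero.1 hqv) ▸ hvK)
  · have hqr : ‖q - v‖ ≤ ‖q - r‖ :=
      hv ▸ ciInf_le ⟨0, by rintro _ ⟨w, rfl⟩; positivity⟩ (⟨r, hr⟩ : K)
    have hqr' : q - r = t • (r - u) := by rw [hq_def, add_sub_cancel_left]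
    calc ‖v - r‖ ≤ ‖v - q‖ + ‖q - r‖ := norm_sub_le_norm_sub_add_norm_sub _ _ _
      _ ≤ 2 * ‖t • (r - u)‖ := by rw [norm_sub_rev, ← hqr']; linarith

lemma intrinsicInterior_subset_interior {W : Type*} [NormedAddCommGroup W] [NormedSpace ℝ W]
    {s : Set W} (h : affineSpan ℝ s = ⊤) : intrinsicInterior ℝ s ⊆ interior s := by
  have hopen : IsOpen (affineSpan ℝ s : Set W) := by
    rw [h, AffineSubspace.top_coe]
    exact isOpen_univ
  exact interior_maximal (Set.image_subset_iff.2 fun _ hx => interior_subset hx)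
    (hopen.isOpenMap_subtype_val _ isOpen_interior)

lemma zero_mem_polarDual (P : Set (E d)) : (0 : E d) ∈ polarDual P :=
  fun _ _ => by simp

lemma mem_maximizers_of_inner_eq_one {P : Set (E d)} {x p : E d} (hx : x ∈ polarDual P)
    (hp : p ∈ P) (h1 : ⟪x, p⟫ = 1) : p ∈ maximizers P x :=
  ⟨hp, fun y hy => by rw [real_inner_comm, real_inner_comm x p, h1]; exact hx y hy⟩

lemma mem_dualFace_of_subset_maximizers {P F : Set (E d)} {x f₀ : E d} (hx : x ∈ polarDual P)
    (hFx : F ⊆ maximizers P x) (hf₀ : f₀ ∈ F) (h1 : ⟪x, f₀⟫ = 1) : x ∈ dualFace P F :=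
  ⟨hx, fun f hf => by
    rw [real_inner_comm, inner_eq_of_mem_maximizers (hFx hf) (hFx hf₀), real_inner_comm, h1]⟩

lemma inv_inner_smul_mem_dualFace {P : Set (E d)} {p c : E d} (h0 : (0 : E d) ∈ interior P)
    (hp : p ∈ maximizers P c) (hne : maximizers P c ≠ P) :
    ⟪p, c⟫⁻¹ • c ∈ dualFace P (maximizers P c) := by
  have hpos : 0 < ⟪p, c⟫ := by
    have h := hp.2 0 (interior_subset h0)
    rw [inner_zero_left] at h
    refine h.lt_of_ne fun h' => hne ?_
    have : c = 0 := eq_zero_of_mem_interior_of_mem_maximizers h0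
      ⟨interior_subset h0, fun y hy => by rw [inner_zero_left, h']; exact hp.2 y hy⟩
    rw [this, maximizers_zero]
  refine ⟨fun y hy => ?_, fun f hf => ?_⟩
  · rw [real_inner_smul_left, real_inner_comm y c, inv_mul_le_iff₀ hpos, mul_one]
    exact hp.2 y hy
  · rw [real_inner_smul_left, real_inner_comm f c, inner_eq_of_mem_maximizers hf hp,
      inv_mul_cancel₀ hpos.ne']

lemma maximizers_polarDual_eq_dualFace {P F : Set (E d)} {c x₀ : E d} {τ : ℝ} (hτ : 0 < τ)
    (hpF : τ • c ∈ F) (hFP : F ⊆ P) (hmin : ∀ w, τ • c ∈ maximizers P w → F ⊆ maximizers P w)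
    (hx₀ : x₀ ∈ polarDual P) (hx₀p : ⟪x₀, τ • c⟫ = 1) :
    maximizers (polarDual P) c = dualFace P F := by
  have hle : ∀ x ∈ polarDual P, τ * ⟪x, c⟫ ≤ 1 := fun x hx => by
    simpa only [real_inner_smul_right] using hx _ (hFP hpF)
  rw [real_inner_smul_right] at hx₀p
  ext x
  refine ⟨fun hx => ?_, fun hx => ⟨hx.1, fun y hy => ?_⟩⟩
  · have h1 : ⟪x, τ • c⟫ = 1 := by
      have := mul_le_mul_of_nonneg_left (hx.2 x₀ hx₀) hτ.le
      rw [real_inner_smul_right]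
      linarith [hle x hx.1]
    exact mem_dualFace_of_subset_maximizers hx.1
      (hmin x (mem_maximizers_of_inner_eq_one hx.1 (hFP hpF) h1)) hpF h1
  · have h1 := hx.2 _ hpF
    rw [real_inner_smul_right] at h1
    have := hle y hy
    exact le_of_mul_le_mul_left (by linarith) hτ

lemma maximizers_convexHull (V : Finset (E d)) (c : E d) :
    maximizers (convexHull ℝ (V : Set (E d))) c =
      convexHull ℝ ((V : Set (E d)) ∩ maximizers (convexHull ℝ (V : Set (E d))) c) := by
  set P := convexHull ℝ (V : Set (E d))
  have hexp := isExposed_maximizers P c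
  have hconv : Convex ℝ (maximizers P c) := hexp.convex (convex_convexHull ℝ _)
  refine subset_antisymm ?_ (convexHull_min Set.inter_subset_right hconv)
  -- Krein–Milman: the extreme points of a face are extreme points of `P`, hence vertices.
  calc maximizers P c = closure (convexHull ℝ ((maximizers P c).extremePoints ℝ)) :=
        (closure_convexHull_extremePoints (hexp.isCompact
          (V.finite_toSet.isCompact_convexHull ℝ)) hconv).symm
    _ ⊆ closure (convexHull ℝ (↑V ∩ maximizers P c)) :=
        closure_mono <| convexHull_mono fun x hx =>
          ⟨extremePoints_convexHull_subset
            (hexp.isExtreme.extremePoints_subset_extremePoints hx), extremePoints_subset hx⟩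
    _ = convexHull ℝ (↑V ∩ maximizers P c) :=
        ((V.finite_toSet.inter_of_left _).isCompact_convexHull ℝ).isClosed.closure_eq

namespace IsPolytope

variable {P : Set (E d)}

lemma isCompact (hP : IsPolytope P) : IsCompact P := by
  obtain ⟨V, -, rfl⟩ := hP
  exact V.finite_toSet.isCompact_convexHull ℝ

lemma nonempty (hP : IsPolytope P) : P.Nonempty := by
  obtain ⟨V, hV, rfl⟩ := hP
  exact (Finset.coe_nonempty.2 hV).convexHull

lemma convex (hP : IsPolytope P) : Convex ℝ P := by
  obtain ⟨V, -, rfl⟩ := hP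
  exact convex_convexHull ℝ _

lemma maximizers_nonempty (hP : IsPolytope P) (c : E d) : (maximizers P c).Nonempty :=
  hP.isCompact.maximizers_nonempty hP.nonempty c

lemma isCompact_maximizers (hP : IsPolytope P) (c : E d) : IsCompact (maximizers P c) :=
  (isExposed_maximizers P c).isCompact hP.isCompact

lemma convex_maximizers (hP : IsPolytope P) (c : E d) : Convex ℝ (maximizers P c) :=
  (isExposed_maximizers P c).convex hP.convex

lemma finite_range_maximizers (hP : IsPolytope P) : (Set.range (maximizers P)).Finite := by
  obtain ⟨V, -, rfl⟩ := hP
  refine (V.finite_toSet.finite_subsets.image (convexHull ℝ)).subset ?_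
  rintro _ ⟨c, rfl⟩
  exact ⟨_, Set.inter_subset_left, (maximizers_convexHull V c).symm⟩

/-- The witness is `c + ε • w` for small `ε > 0`. -/
lemma exists_maximizers_eq_maximizers_maximizers (hP : IsPolytope P) (c w : E d) :
    ∃ c', maximizers P c' = maximizers (maximizers P c) w := by
  obtain ⟨g, hg⟩ := (hP.isCompact_maximizers c).maximizers_nonempty (hP.maximizers_nonempty c) w
  obtain ⟨V, -, rfl⟩ := hP
  set P := convexHull ℝ (V : Set (E d))
  set F := maximizers P c
  have hev : ∀ᶠ ε in 𝓝 (0 : ℝ), ∀ a ∈ V, a ∉ F → ⟪a, c + ε • w⟫ < ⟪g, c + ε • w⟫ := by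
    refine (Filter.eventually_all_finset V).2 fun a ha => ?_
    by_cases haF : a ∈ F
    · exact Filter.Eventually.of_forall fun _ h => absurd haF h
    have hlt : ⟪a, c⟫ < ⟪g, c⟫ :=
      inner_lt_of_notMem_maximizers hg.1 (subset_convexHull ℝ _ ha) haF
    exact (Continuous.tendsto (f := fun ε : ℝ => ⟪g, c + ε • w⟫ - ⟪a, c + ε • w⟫)
      (by fun_prop) 0).eventually (lt_mem_nhds (by simpa using hlt)) |>.mono
        fun _ h _ => sub_pos.1 h
  obtain ⟨ε, hε, hεpos : (0 : ℝ) < ε⟩ :=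
    ((hev.filter_mono nhdsWithin_le_nhds).and self_mem_nhdsWithin).exists (f := 𝓝[>] (0 : ℝ))
  have hgmax : g ∈ maximizers P (c + ε • w) := by
    refine ⟨hg.1.1, fun y hy => convexHull_min (fun a ha => ?_)
      (convex_halfSpace_le (f := fun y => ⟪y, c + ε • w⟫) ⟨fun _ _ => inner_add_left _ _ _,
        fun _ _ => real_inner_smul_left _ _ _⟩ _) hy⟩
    by_cases haF : a ∈ F
    · have h1 := inner_eq_of_mem_maximizers haF hg.1
      have h2 := mul_le_mul_of_nonneg_left (hg.2 a haF) hεpos.le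
      simp only [Set.mem_ofPred_eq, inner_add_right, real_inner_smul_right]
      linarith
    · exact (hε a ha haF).le
  refine ⟨c + ε • w, Set.Subset.antisymm (fun x hx => ?_) fun x hx => ?_⟩
  · have hxF : x ∈ F := by
      rw [maximizers_convexHull] at hx
      exact convexHull_min
        (fun a ha => by_contra fun haF => (hε a ha.1 haF).not_ge (ha.2.2 g hg.1.1))
        ((isExposed_maximizers P c).convex (convex_convexHull ℝ _)) hx
    refine ⟨hxF, fun y hy => ?_⟩
    have h1 := hx.2 y hy.1
    have h2 := inner_eq_of_mem_maximizers hy hxF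
    simp only [inner_add_right, real_inner_smul_right] at h1
    nlinarith
  · have h1 := inner_eq_of_mem_maximizers hx.1 hg.1
    have h2 := inner_eq_of_mem_maximizers hx hg
    refine ⟨hx.1.1, fun y hy => (hgmax.2 y hy).trans_eq ?_⟩
    simp only [inner_add_right, real_inner_smul_right, h1, h2]

lemma exists_minimal_maximizers (hP : IsPolytope P) {p : E d} (hp : p ∈ P) :
    ∃ w, p ∈ maximizers P w ∧ ∀ w', p ∈ maximizers P w' → maximizers P w ⊆ maximizers P w' := by
  obtain ⟨_, ⟨⟨w, rfl⟩, hpw⟩, hmin⟩ := (hP.finite_range_maximizers.subset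
    (Set.sep_subset _ fun F => p ∈ F)).exists_minimal ⟨P, ⟨0, maximizers_zero P⟩, hp⟩
  refine ⟨w, hpw, fun w' hpw' => ?_⟩
  have hsum := maximizers_add_eq_inter hpw hpw'
  exact (hmin ⟨⟨w + w', rfl⟩, hsum ▸ ⟨hpw, hpw'⟩⟩ (hsum ▸ Set.inter_subset_left)).trans
    (hsum ▸ Set.inter_subset_right)

/-- Finitely many faces make the union of the proper subfaces of a face closed; the metric
projections of `r + t • (r - u)`, which lie in proper subfaces, converge to `r`. -/
lemma exists_maximizers_ssubset (hP : IsPolytope P) {c r u : E d} (hr : r ∈ maximizers P c)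
    (hu : u ∈ maximizers P c) (hexit : ∀ t : ℝ, 0 < t → r + t • (r - u) ∉ maximizers P c) :
    ∃ c', r ∈ maximizers P c' ∧ maximizers P c' ⊂ maximizers P c := by
  set F := maximizers P c
  set faces := {F' ∈ Set.range (maximizers P) | F' ⊂ F}
  have hB : IsClosed (⋃ F' ∈ faces, F') :=
    (hP.finite_range_maximizers.subset (Set.sep_subset _ _)).isClosed_biUnion
      fun _ ⟨⟨c', hc'⟩, _⟩ => hc' ▸ (hP.isCompact_maximizers c').isClosed
  suffices hrB : r ∈ ⋃ F' ∈ faces, F' by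
    obtain ⟨_, ⟨⟨c', rfl⟩, hc'⟩, hrc'⟩ := Set.mem_iUnion₂.1 hrB
    exact ⟨c', hrc', hc'⟩
  by_contra hrB
  obtain ⟨ε, hε, hball⟩ := Metric.isOpen_iff.1 hB.isOpen_compl r hrB
  have hru : 0 < ‖r - u‖ := norm_pos_iff.2 fun h => hexit 1 one_pos (by simpa [h] using hr)
  obtain ⟨w, v, hv, hne, hdist⟩ := exists_maximizers_ne_near (hP.isCompact_maximizers c).isClosed
    (hP.convex_maximizers c) hr hu (hexit (ε / (4 * ‖r - u‖)) (by positivity))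
  obtain ⟨c', hc'⟩ := hP.exists_maximizers_eq_maximizers_maximizers c w
  refine hball (?_ : v ∈ Metric.ball r ε)
    (Set.mem_biUnion (⟨⟨c', rfl⟩, ?_⟩ : maximizers P c' ∈ faces) (hc' ▸ hv))
  · have : 2 * ‖(ε / (4 * ‖r - u‖)) • (r - u)‖ = ε / 2 := by
      rw [norm_smul, Real.norm_of_nonneg (by positivity)]
      field_simp
      ring
    rw [Metric.mem_ball, dist_eq_norm]
    linarith
  · exact hc' ▸ (maximizers_subset _ _).ssubset_of_ne hne

/-- `hN` says that every face meets its normal cone. In a minimal counterexample `F = S(P;u)`,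
push `z` away from `u` to the relative boundary point `r = z + τ • (z - u)`; then
`S(P;z) = S(P;r + τ • u) ⊆ S(P;r)` lies in a smaller face. -/
theorem maximizers_subset_of_mem (hP : IsPolytope P)
    (hN : ∀ c, ∃ u ∈ maximizers P c, maximizers P u = maximizers P c) {c z : E d}
    (hz : z ∈ maximizers P c) : maximizers P z ⊆ maximizers P c := by
  set bad := {F ∈ Set.range (maximizers P) | ∃ z ∈ F, ¬ maximizers P z ⊆ F}
  by_contra h
  obtain ⟨_, ⟨⟨c, rfl⟩, z, hz, hbad⟩, hmin⟩ :=
    (hP.finite_range_maximizers.subset (Set.sep_subset _ _)).exists_minimal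
      (⟨_, ⟨c, rfl⟩, z, hz, h⟩ : bad.Nonempty)
  obtain ⟨u, hu, huc⟩ := hN c
  have hzu : z - u ≠ 0 := sub_ne_zero.2 fun h => hbad (h ▸ huc.le)
  obtain ⟨τ, hτ, hr, hexit⟩ := (hP.isCompact_maximizers c).exists_max_add_smul_mem hz hzu
  set r := z + τ • (z - u) with hr_def
  obtain ⟨c', hrc', hc'⟩ := hP.exists_maximizers_ssubset hr hu fun t ht => by
    have : r + t • (r - u) = z + (τ + t * (1 + τ)) • (z - u) := by rw [hr_def]; module
    exact this ▸ hexit _ (by nlinarith)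
  have hrc : maximizers P r ⊆ maximizers P c' :=
    by_contra fun h => hc'.2 (hmin ⟨⟨c', rfl⟩, r, hrc', h⟩ hc'.1)
  obtain ⟨m, hm⟩ := hP.maximizers_nonempty r
  have hmu : m ∈ maximizers P (τ • u) :=
    maximizers_subset_maximizers_smul P u hτ (huc ▸ hc'.1 (hrc hm))
  have hzr : maximizers P z ⊆ maximizers P r := by
    rw [← maximizers_smul P z (by positivity : (0 : ℝ) < 1 + τ),
      show (1 + τ) • z = r + τ • u by rw [hr_def]; module, maximizers_add_eq_inter hm hmu]
    exact Set.inter_subset_left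
  exact hbad (hzr.trans (hrc.trans hc'.1))

end IsPolytope

theorem IsPerfectlyCentered.exists_maximizers_eq {P : Set (E d)} (hpc : IsPerfectlyCentered P)
    (hP : IsPolytope P) (c : E d) : ∃ u ∈ maximizers P c, maximizers P u = maximizers P c := by
  have hface : IsFace P (maximizers P c) := by
    by_cases hc : c = 0
    · exact Or.inr (Or.inl (hc ▸ maximizers_zero P))
    · exact Or.inr (Or.inr ⟨c, hc, rfl⟩)
  obtain ⟨u, hu, hN⟩ := hpc _ hface (hP.maximizers_nonempty c)
  exact ⟨u, intrinsicInterior_subset hu, hN⟩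

theorem IsPerfectlyCentered.zero_mem_interior {P : Set (E d)} (hpc : IsPerfectlyCentered P)
    (hP : IsPolytope P) (hfull : affineSpan ℝ P = ⊤) : (0 : E d) ∈ interior P := by
  obtain ⟨u, hu, hN⟩ := hpc P (Or.inr (Or.inl rfl)) hP.nonempty
  have hu' := intrinsicInterior_subset_interior hfull hu
  have hN : maximizers P u = P := hN
  rwa [← eq_zero_of_mem_interior_of_mem_maximizers hu' (hN.symm ▸ interior_subset hu')]

namespace IsPolytope

variable {P : Set (E d)}

/-- `G = S(P;c)`, and `F` is the smallest face containing the boundary point `τ • c` on the ray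
through `c`; a supporting face at that point provides the normalized `x₀ ∈ P*`. -/
lemma exists_faces_eq_maximizers_add_polarDual (hP : IsPolytope P) (h0 : (0 : E d) ∈ interior P)
    (hN : ∀ c, ∃ u ∈ maximizers P c, maximizers P u = maximizers P c) {c : E d} (hc : c ≠ 0) :
    ∃ F G, IsNontrivialFace P F ∧ IsNontrivialFace P G ∧ G ⊆ F ∧
      maximizers (P + polarDual P) c = G + dualFace P F := by
  obtain ⟨τ, hτ, hp, hexit⟩ := hP.isCompact.exists_pos_smul_mem h0 hc
  obtain ⟨c', hpc', hc'⟩ := hP.exists_maximizers_ssubset (c := 0) (u := 0)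
    (by rwa [maximizers_zero]) (by rw [maximizers_zero]; exact interior_subset h0)
    fun t ht => by
      rw [maximizers_zero, sub_zero, show τ • c + t • τ • c = ((1 + t) * τ) • c by module]
      exact hexit _ (by nlinarith)
  rw [maximizers_zero] at hc'
  obtain ⟨w, hpw, hmin⟩ := hP.exists_minimal_maximizers hp
  have hF : IsNontrivialFace P (maximizers P w) :=
    isNontrivialFace_iff.2 ⟨⟨w, rfl⟩, ⟨_, hpw⟩, fun h => hc'.ne
      ((maximizers_subset P c').antisymm (h.symm.subset.trans (hmin c' hpc')))⟩
  have hG : IsNontrivialFace P (maximizers P c) :=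
    isNontrivialFace_iff.2 ⟨⟨c, rfl⟩, hP.maximizers_nonempty c, maximizers_ne_self h0 hc⟩
  have hGF : maximizers P c ⊆ maximizers P w :=
    maximizers_smul P c hτ ▸ hP.maximizers_subset_of_mem hN hpw
  have hx₀ := inv_inner_smul_mem_dualFace h0 hpc' hc'.ne
  refine ⟨_, _, hF, hG, hGF, ?_⟩
  rw [maximizers_set_add, maximizers_polarDual_eq_dualFace hτ hpw (maximizers_subset P w) hmin
    hx₀.1 (hx₀.2 _ hpc')]

/-- With `uF ∈ F ∩ N(F)` and `uG ∈ G ∩ N(G)`, the face `G + F^D` is exposed by `uG + uF`; the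
smallest face containing the midpoint of `uG` and `uF` is `F`. -/
lemma isNontrivialFace_add_dualFace (hP : IsPolytope P) (h0 : (0 : E d) ∈ interior P)
    (hN : ∀ c, ∃ u ∈ maximizers P c, maximizers P u = maximizers P c) {F G : Set (E d)}
    (hF : IsNontrivialFace P F) (hG : IsNontrivialFace P G) (hGF : G ⊆ F) :
    IsNontrivialFace (P + polarDual P) (G + dualFace P F) := by
  obtain ⟨⟨cF, rfl⟩, -, hFP⟩ := isNontrivialFace_iff.1 hF
  obtain ⟨⟨cG, rfl⟩, -, hGP⟩ := isNontrivialFace_iff.1 hG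
  obtain ⟨uF, huF, hFu⟩ := hN cF
  obtain ⟨uG, huG, hGu⟩ := hN cG
  rw [← hFu] at hFP hGF huF ⊢
  rw [← hGu] at hGP hGF huG ⊢
  have hGc : maximizers P (uG + uF) = maximizers P uG := by
    rw [maximizers_add_eq_inter huG (hGF huG), Set.inter_eq_left.2 hGF]
  have hx₀ := inv_inner_smul_mem_dualFace h0 huF hFP
  have hFc : maximizers (polarDual P) (uG + uF) = dualFace P (maximizers P uF) := by
    refine maximizers_polarDual_eq_dualFace (τ := 1 / 2) one_half_pos ?_ (maximizers_subset P uF)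
      (fun w hw => hP.maximizers_subset_of_mem hN ⟨huF.1, fun y hy => ?_⟩) hx₀.1 ?_
    · rw [smul_add]
      exact hP.convex_maximizers uF (hGF huG) huF (by norm_num) (by norm_num) (by norm_num)
    · have h1 := hw.2 y hy
      have h2 := hw.2 uG huG.1
      simp only [inner_smul_left, inner_add_left, RCLike.conj_to_real] at h1 h2
      linarith
    · rw [inner_smul_right, inner_add_right, hx₀.2 _ (hGF huG), hx₀.2 _ huF]
      norm_num
  have hc : uG + uF ≠ 0 := fun h => hGP (by rw [← hGc, h, maximizers_zero])
  rw [← hGc, ← hFc, ← maximizers_set_add]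
  refine isNontrivialFace_iff.2 ⟨⟨_, rfl⟩, ?_, maximizers_ne_self (x := 0) ?_ hc⟩
  · rw [maximizers_set_add, hGc, hFc]
    exact (hP.maximizers_nonempty uG).add ⟨_, hx₀⟩
  · exact interior_mono
      (fun x hx => by simpa using Set.add_mem_add hx (zero_mem_polarDual P)) h0

end IsPolytope

theorem nontrivial_faces_of_nesterov_rounding_general {d : ℕ} (P : Set (E d))
    (hP : IsPolytope P) (hfull : affineSpan ℝ P = ⊤)
    (hpc : IsPerfectlyCentered P)
    (H : Set (E d)) :
    IsNontrivialFace (P + polarDual P) H ↔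
      ∃ F G : Set (E d), IsNontrivialFace P F ∧ IsNontrivialFace P G ∧
        G ⊆ F ∧ H = G + dualFace P F := by
  have h0 := hpc.zero_mem_interior hP hfull
  have hN := hpc.exists_maximizers_eq hP
  constructor
  · intro hH
    obtain ⟨⟨c, rfl⟩, -, hne⟩ := isNontrivialFace_iff.1 hH
    have hc : c ≠ 0 := by
      rintro rfl
      exact hne (maximizers_zero _)
    exact hP.exists_faces_eq_maximizers_add_polarDual h0 hN hc
  · rintro ⟨F, G, hF, hG, hGF, rfl⟩
    exact hP.isNontrivialFace_add_dualFace h0 hN hF hG hGF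

theorem nontrivial_faces_of_nesterov_rounding {d : ℕ} (P : Set (E d))
    (hP : IsPolytope P) (hfull : affineSpan ℝ P = ⊤)
    (hpc : IsPerfectlyCentered P)
    (H : Set (E d)) (hH : H ⊆ P + polarDual P) :
    IsNontrivialFace (P + polarDual P) H ↔
      ∃ F G : Set (E d), IsNontrivialFace P F ∧ IsNontrivialFace P G ∧
        G ⊆ F ∧ H = G + dualFace P F :=
  nontrivial_faces_of_nesterov_rounding_general P hP hfull hpc H
end
end

section
/- Let F be a nontrivial face of a full-dimensional centered polytope P in ℝ^d. Then the direction of the affine span of F and the direction of the affine span of F^D (the linear subspaces obtained by translating these affine spans to the origin) are orthogonal to each other. -/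
open Pointwise RealInnerProductSpace

noncomputable section

theorem face_direction_orthogonal_dualFace_direction {d : ℕ} (P F : Set (E d))
    (hP : IsPolytope P) (hfull : affineSpan ℝ P = ⊤)
    (hc : 0 ∈ interior P) (hF : IsNontrivialFace P F) :
    ∀ u ∈ (affineSpan ℝ F).direction,
      ∀ v ∈ (affineSpan ℝ (dualFace P F)).direction, ⟪u, v⟫ = 0 := by
  intro u hu v hv
  rw [direction_affineSpan] at hu hv
  have key : vectorSpan ℝ F ≤ (vectorSpan ℝ (dualFace P F))ᗮ := by
    rw [vectorSpan_def, Submodule.span_le]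
    rintro w ⟨f1, hf1, f2, hf2, rfl⟩
    rw [SetLike.mem_coe, Submodule.mem_orthogonal]
    intro x hx
    rw [vectorSpan_def] at hx
    induction hx using Submodule.span_induction with
    | mem y hy =>
      obtain ⟨x1, hx1, x2, hx2, rfl⟩ := hy
      have h1 := hx1.2 f1 hf1
      have h2 := hx1.2 f2 hf2
      have h3 := hx2.2 f1 hf1
      have h4 := hx2.2 f2 hf2
      simp only [vsub_eq_sub, inner_sub_left, inner_sub_right, h1, h2, h3, h4]
      ring
    | zero => simp
    | add a b _ _ ha hb => rw [inner_add_left, ha, hb, add_zero]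
    | smul r a _ ha => rw [inner_smul_left, ha, mul_zero]
  have h := key hu
  rw [Submodule.mem_orthogonal] at h
  rw [real_inner_comm]
  exact h v hv
end
end

section
/- Let P be a full-dimensional perfectly centered polytope in ℝ^d and let F be a nontrivial face of P, so that F + F^D is a facet of P + P*. Then for every nonempty face G of P with G ⊆ F, the set G + F^D is a face of P + P* contained in F + F^D, of dimension dim(G) + dim(F^D). -/
open Pointwise RealInnerProductSpace

noncomputable section

/-- From a point of the intrinsic interior one can move slightly beyond,
away from any point of the set. -/
lemma exists_beyond {d : ℕ} {F : Set (E d)} {x f : E d}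
    (hx : x ∈ intrinsicInterior ℝ F) (hf : f ∈ F) :
    ∃ t : ℝ, 0 < t ∧ x + t • (x - f) ∈ F := by
  obtain ⟨y, hy, hyx⟩ := mem_intrinsicInterior.1 hx
  have hfs : f ∈ affineSpan ℝ F := subset_affineSpan ℝ F hf
  have hmem : ∀ t : ℝ, (y : E d) + t • ((y : E d) - f) ∈ affineSpan ℝ F := by
    intro t
    have := AffineSubspace.smul_vsub_vadd_mem (affineSpan ℝ F) t y.2 hfs y.2
    simpa [vsub_eq_sub, vadd_eq_add, add_comm] using this
  set φ : ℝ → (affineSpan ℝ F : Set (E d)) :=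
    fun t => ⟨(y : E d) + t • ((y : E d) - f), hmem t⟩ with hφ
  have hφc : Continuous φ := by
    apply Continuous.subtype_mk
    fun_prop
  have h0 : φ 0 = y := by
    apply Subtype.ext
    simp [hφ]
  have hnhds : φ ⁻¹' (interior ((↑) ⁻¹' F : Set (affineSpan ℝ F))) ∈ nhds (0 : ℝ) :=
    hφc.continuousAt.preimage_mem_nhds (isOpen_interior.mem_nhds (h0 ▸ hy))
  obtain ⟨ε, hε, hball⟩ := Metric.mem_nhds_iff.1 hnhds
  refine ⟨ε / 2, by linarith, ?_⟩
  have hmemball : (ε / 2 : ℝ) ∈ Metric.ball (0 : ℝ) ε := by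
    rw [Metric.mem_ball, Real.dist_eq, sub_zero, abs_of_pos (by linarith)]
    linarith
  have := interior_subset (hball hmemball)
  simp only [Set.mem_preimage, hφ] at this
  rw [← hyx]
  exact this

lemma maximizers_add {d : ℕ} {A B : Set (E d)} {c : E d}
    (hA : (maximizers A c).Nonempty) (hB : (maximizers B c).Nonempty) :
    maximizers (A + B) c = maximizers A c + maximizers B c := by
  obtain ⟨a0, ha0A, ha0⟩ := hA
  obtain ⟨b0, hb0B, hb0⟩ := hB
  ext x
  constructor
  · rintro ⟨hxAB, hxmax⟩
    obtain ⟨a, haA, b, hbB, rfl⟩ := Set.mem_add.1 hxAB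
    have h1 : ⟪a0 + b0, c⟫ ≤ ⟪a + b, c⟫ :=
      hxmax _ (Set.add_mem_add ha0A hb0B)
    have ha' : ⟪a, c⟫ ≤ ⟪a0, c⟫ := ha0 a haA
    have hb' : ⟪b, c⟫ ≤ ⟪b0, c⟫ := hb0 b hbB
    rw [inner_add_left, inner_add_left] at h1
    have haeq : ⟪a, c⟫ = ⟪a0, c⟫ := by linarith
    have hbeq : ⟪b, c⟫ = ⟪b0, c⟫ := by linarith
    exact Set.add_mem_add ⟨haA, fun y hy => haeq ▸ ha0 y hy⟩
      ⟨hbB, fun y hy => hbeq ▸ hb0 y hy⟩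
  · rintro hx
    obtain ⟨a, ⟨haA, ha⟩, b, ⟨hbB, hb⟩, rfl⟩ := Set.mem_add.1 hx
    refine ⟨Set.add_mem_add haA hbB, ?_⟩
    rintro y hy
    obtain ⟨u, huA, v, hvB, rfl⟩ := Set.mem_add.1 hy
    rw [inner_add_left, inner_add_left]
    exact add_le_add (ha u huA) (hb v hvB)

lemma vectorSpan_add {d : ℕ} {A B : Set (E d)} (hA : A.Nonempty) (hB : B.Nonempty) :
    vectorSpan ℝ (A + B) = vectorSpan ℝ A ⊔ vectorSpan ℝ B := by
  obtain ⟨a0, ha0⟩ := hA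
  obtain ⟨b0, hb0⟩ := hB
  apply le_antisymm
  · rw [vectorSpan, Submodule.span_le]
    rintro v hv
    obtain ⟨p, hp, q, hq, rfl⟩ := hv
    obtain ⟨a, haA, b, hbB, rfl⟩ := Set.mem_add.1 hp
    obtain ⟨a', haA', b', hbB', rfl⟩ := Set.mem_add.1 hq
    show (a + b) -ᵥ (a' + b') ∈ (vectorSpan ℝ A ⊔ vectorSpan ℝ B : Submodule ℝ (E d))
    have : (a + b) -ᵥ (a' + b') = (a -ᵥ a') + (b -ᵥ b') := by
      simp only [vsub_eq_sub]; abel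
    rw [this]
    exact Submodule.add_mem_sup (vsub_mem_vectorSpan ℝ haA haA')
      (vsub_mem_vectorSpan ℝ hbB hbB')
  · apply sup_le
    · rw [vectorSpan, Submodule.span_le]
      rintro v ⟨a, haA, a', haA', rfl⟩
      show a -ᵥ a' ∈ vectorSpan ℝ (A + B)
      have : a -ᵥ a' = (a + b0) -ᵥ (a' + b0) := by simp only [vsub_eq_sub]; abel
      rw [this]
      exact vsub_mem_vectorSpan ℝ (Set.add_mem_add haA hb0) (Set.add_mem_add haA' hb0)
    · rw [vectorSpan, Submodule.span_le]
      rintro v ⟨b, hbB, b', hbB', rfl⟩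
      show b -ᵥ b' ∈ vectorSpan ℝ (A + B)
      have : b -ᵥ b' = (a0 + b) -ᵥ (a0 + b') := by simp only [vsub_eq_sub]; abel
      rw [this]
      exact vsub_mem_vectorSpan ℝ (Set.add_mem_add ha0 hbB) (Set.add_mem_add ha0 hbB')

theorem subface_plus_dualFace_is_face {d : ℕ} (P F G : Set (E d))
    (hP : IsPolytope P) (hfull : affineSpan ℝ P = ⊤)
    (hpc : IsPerfectlyCentered P)
    (hF : IsNontrivialFace P F) (hG : IsFace P G) (hGne : G.Nonempty)
    (hGF : G ⊆ F) :
    IsFace (P + polarDual P) (G + dualFace P F) ∧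
    G + dualFace P F ⊆ F + dualFace P F ∧
    dimSet (G + dualFace P F) = dimSet G + dimSet (dualFace P F) := by
  have hFne : F.Nonempty := Set.nonempty_iff_ne_empty.2 hF.2.1
  obtain ⟨c₂, hc₂ri, hc₂N⟩ := hpc F hF.1 hFne
  obtain ⟨c₁, hc₁ri, hc₁N⟩ := hpc G hG hGne
  have hc₂N : maximizers P c₂ = F := hc₂N
  have hc₁N : maximizers P c₁ = G := hc₁N
  have hc₂F : c₂ ∈ F := intrinsicInterior_subset hc₂ri
  have hc₁G : c₁ ∈ G := intrinsicInterior_subset hc₁ri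
  have hFP : F ⊆ P := by rw [← hc₂N]; exact fun x hx => hx.1
  have hGP : G ⊆ P := fun x hx => hFP (hGF hx)
  -- c₂ ≠ 0
  have hc₂0 : c₂ ≠ 0 := by
    rintro rfl
    apply hF.2.2
    rw [← hc₂N]
    ext x
    simp [maximizers]
  have hm₂ : (0:ℝ) < ⟪c₂, c₂⟫ :=
    lt_of_le_of_ne real_inner_self_nonneg (Ne.symm (inner_self_ne_zero.2 hc₂0))
  -- every point of F attains max value ⟪c₂,c₂⟫ in direction c₂
  have hFmax : ∀ f ∈ F, ⟪f, c₂⟫ = ⟪c₂, c₂⟫ := by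
    intro f hf
    rw [← hc₂N] at hf hc₂F
    exact le_antisymm (hc₂F.2 f hf.1) (hf.2 c₂ hc₂F.1)
  have hGmax : ∀ g ∈ G, ⟪g, c₁⟫ = ⟪c₁, c₁⟫ := by
    intro g hg
    rw [← hc₁N] at hg hc₁G
    exact le_antisymm (hc₁G.2 g hg.1) (hg.2 c₁ hc₁G.1)
  -- explicit element of the dual face
  have hx₀ : (⟪c₂, c₂⟫)⁻¹ • c₂ ∈ dualFace P F := by
    refine ⟨?_, ?_⟩
    · intro y hy
      rw [real_inner_smul_left]
      have : ⟪y, c₂⟫ ≤ ⟪c₂, c₂⟫ := by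
        rw [← hc₂N] at hc₂F; exact hc₂F.2 y hy
      rw [real_inner_comm y c₂]
      calc (⟪c₂, c₂⟫)⁻¹ * ⟪y, c₂⟫ ≤ (⟪c₂, c₂⟫)⁻¹ * ⟪c₂, c₂⟫ := by
            apply mul_le_mul_of_nonneg_left this (le_of_lt (inv_pos.2 hm₂))
        _ = 1 := inv_mul_cancel₀ (ne_of_gt hm₂)
    · intro f hf
      rw [real_inner_smul_left, real_inner_comm f c₂, hFmax f hf,
        inv_mul_cancel₀ (ne_of_gt hm₂)]
  have hDne : (dualFace P F).Nonempty := ⟨_, hx₀⟩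
  -- elements of dualFace P F pair to 1 with elements of F
  have hDinner : ∀ x ∈ dualFace P F, ∀ f ∈ F, ⟪x, f⟫ = 1 := fun x hx => hx.2
  -- claim A : maximizers P (c₁ + c₂) = G
  have claimA : maximizers P (c₁ + c₂) = G := by
    ext x
    constructor
    · rintro ⟨hxP, hxmax⟩
      have h1 : ⟪c₁, c₁ + c₂⟫ ≤ ⟪x, c₁ + c₂⟫ := hxmax c₁ (hGP hc₁G)
      rw [inner_add_right, inner_add_right] at h1
      have h2 : ⟪x, c₁⟫ ≤ ⟪c₁, c₁⟫ := by
        rw [← hc₁N] at hc₁G; exact hc₁G.2 x hxP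
      have h3 : ⟪x, c₂⟫ ≤ ⟪c₁, c₂⟫ := by
        have hc₁F : c₁ ∈ maximizers P c₂ := by rw [hc₂N]; exact hGF hc₁G
        exact hc₁F.2 x hxP
      have h4 : ⟪x, c₁⟫ = ⟪c₁, c₁⟫ := by linarith
      rw [← hc₁N]
      refine ⟨hxP, fun y hy => ?_⟩
      rw [h4]
      rw [← hc₁N] at hc₁G
      exact hc₁G.2 y hy
    · intro hxG
      refine ⟨hGP hxG, fun y hy => ?_⟩
      rw [inner_add_right, inner_add_right]
      have h2 : ⟪y, c₁⟫ ≤ ⟪x, c₁⟫ := by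
        rw [← hc₁N] at hxG; exact hxG.2 y hy
      have h3 : ⟪y, c₂⟫ ≤ ⟪x, c₂⟫ := by
        have hxF : x ∈ maximizers P c₂ := by rw [hc₂N]; exact hGF hxG
        exact hxF.2 y hy
      linarith
  -- claim B : maximizers (polarDual P) (c₁ + c₂) = dualFace P F
  have claimB : maximizers (polarDual P) (c₁ + c₂) = dualFace P F := by
    have hval : ∀ x ∈ dualFace P F, ⟪x, c₁ + c₂⟫ = 2 := by
      intro x hx
      rw [inner_add_right, hDinner x hx c₁ (hGF hc₁G), hDinner x hx c₂ hc₂F]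
      norm_num
    ext x
    constructor
    · rintro ⟨hxD, hxmax⟩
      have h1 : ⟪(⟪c₂, c₂⟫)⁻¹ • c₂, c₁ + c₂⟫ ≤ ⟪x, c₁ + c₂⟫ := hxmax _ hx₀.1
      rw [hval _ hx₀] at h1
      have h2 : ⟪x, c₁⟫ ≤ 1 := hxD c₁ (hGP hc₁G)
      have h3 : ⟪x, c₂⟫ ≤ 1 := hxD c₂ (hFP hc₂F)
      rw [inner_add_right] at h1
      have hxc₂ : ⟪x, c₂⟫ = 1 := by linarith
      refine ⟨hxD, fun f hf => ?_⟩
      obtain ⟨t, ht, hz⟩ := exists_beyond hc₂ri hf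
      have hzP : c₂ + t • (c₂ - f) ∈ P := hFP hz
      have h4 : ⟪x, c₂ + t • (c₂ - f)⟫ ≤ 1 := hxD _ hzP
      have h5 : ⟪x, f⟫ ≤ 1 := hxD f (hFP hf)
      rw [inner_add_right, real_inner_smul_right, inner_sub_right, hxc₂] at h4
      nlinarith
    · intro hxD
      refine ⟨hxD.1, fun y hy => ?_⟩
      rw [hval x hxD, inner_add_right]
      have h2 : ⟪y, c₁⟫ ≤ 1 := hy c₁ (hGP hc₁G)
      have h3 : ⟪y, c₂⟫ ≤ 1 := hy c₂ (hFP hc₂F)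
      linarith
  -- c₁ + c₂ ≠ 0
  have hc0 : c₁ + c₂ ≠ 0 := by
    intro h
    have h1 : ⟪c₁ + c₂, c₂⟫ = 0 := by rw [h, inner_zero_left]
    rw [inner_add_left, hFmax c₁ (hGF hc₁G)] at h1
    linarith
  -- orthogonality of the two vector spans
  have horth : ∀ v ∈ vectorSpan ℝ G, ∀ w ∈ vectorSpan ℝ (dualFace P F), ⟪v, w⟫ = 0 := by
    intro v hv w hw
    induction hv using Submodule.span_induction with
    | mem v hv =>
      obtain ⟨g, hg, g', hg', rfl⟩ := hv
      induction hw using Submodule.span_induction with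
      | mem w hwm =>
        obtain ⟨x, hx, x', hx', rfl⟩ := hwm
        simp only [vsub_eq_sub, inner_sub_left, inner_sub_right]
        rw [real_inner_comm x g, real_inner_comm x' g, real_inner_comm x g',
          real_inner_comm x' g', hDinner x hx g (hGF hg), hDinner x hx g' (hGF hg'),
          hDinner x' hx' g (hGF hg), hDinner x' hx' g' (hGF hg')]
        ring
      | zero => rw [inner_zero_right]
      | add w₁ w₂ _ _ h₁ h₂ => rw [inner_add_right, h₁, h₂]; ring
      | smul a w₁ _ h₁ => rw [real_inner_smul_right, h₁]; ring
    | zero => rw [inner_zero_left]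
    | add v₁ v₂ _ _ h₁ h₂ => rw [inner_add_left, h₁, h₂]; ring
    | smul a v₁ _ h₁ => rw [real_inner_smul_left, h₁]; ring
  have hdisj : vectorSpan ℝ G ⊓ vectorSpan ℝ (dualFace P F) = ⊥ := by
    rw [eq_bot_iff]
    rintro v ⟨hv1, hv2⟩
    have := horth v hv1 v hv2
    simpa [Submodule.mem_bot] using inner_self_eq_zero.1 this
  refine ⟨?_, ?_, ?_⟩
  · right; right
    refine ⟨c₁ + c₂, hc0, ?_⟩
    rw [maximizers_add (c := c₁ + c₂) (A := P) (B := polarDual P), claimA, claimB]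
    · rw [claimA]; exact hGne
    · rw [claimB]; exact hDne
  · exact Set.add_subset_add_right hGF
  · simp only [dimSet]
    rw [direction_affineSpan, direction_affineSpan, direction_affineSpan,
      vectorSpan_add hGne hDne]
    have := Submodule.finrank_sup_add_finrank_inf_eq (vectorSpan ℝ G)
      (vectorSpan ℝ (dualFace P F))
    rw [hdisj] at this
    simpa using this
end
end

section
/- Let P be a full-dimensional centered polytope in ℝ^d, and suppose G_1 + F_1^D and G_2 + F_2^D are nonempty faces of P + P*, where G_1 ⊆ F_1 and G_2 ⊆ F_2 are nontrivial faces of P. Then G_1 + F_1^D ⊆ G_2 + F_2^D if and only if G_1 ⊆ G_2 and F_2 ⊆ F_1. -/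
open Pointwise RealInnerProductSpace

noncomputable section

/-- A nontrivial face is a subset of the polytope. -/
lemma nontrivialFace_subset {d : ℕ} {P F : Set (E d)} (h : IsNontrivialFace P F) : F ⊆ P := by
  obtain ⟨hf, hne, hnp⟩ := h
  rcases hf with h | h | ⟨c, hc, h⟩
  · exact absurd h hne
  · exact absurd h hnp
  · rw [h]; exact fun x hx => hx.1

/-- Unique decomposition lemma: if `g + x = g' + x'` with the pairings
`⟪x,g⟫ = ⟪x',g'⟫ = 1` and `⟪x,g'⟫ ≤ 1`, `⟪x',g⟫ ≤ 1`, then `x = x'` and `g = g'`. -/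
lemma unique_decomp {d : ℕ} {x x' g g' : E d} (hsum : g' + x' = g + x)
    (h1 : ⟪x, g⟫ = 1) (h2 : ⟪x', g'⟫ = 1) (h3 : ⟪x, g'⟫ ≤ 1) (h4 : ⟪x', g⟫ ≤ 1) :
    x = x' ∧ g = g' := by
  have hxx : x' - x = g - g' := by
    rw [sub_eq_sub_iff_add_eq_add, add_comm x' g']
    exact hsum
  have hpos : (0:ℝ) ≤ ⟪x - x', g - g'⟫ := by
    rw [inner_sub_left, inner_sub_right, inner_sub_right, h1, h2]
    linarith
  have hneg : ⟪x - x', g - g'⟫ = -‖x - x'‖^2 := by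
    rw [← hxx, show x' - x = -(x - x') from (neg_sub x x').symm, inner_neg_right,
      real_inner_self_eq_norm_sq]
  have h5 : ‖x - x'‖ = 0 := by nlinarith [norm_nonneg (x - x')]
  have hxe : x = x' := sub_eq_zero.mp (norm_eq_zero.mp h5)
  refine ⟨hxe, ?_⟩
  have h6 : g - g' = 0 := by rw [← hxx, hxe, sub_self]
  exact sub_eq_zero.mp h6

theorem face_inclusion_in_nesterov_rounding {d : ℕ} (P F₁ F₂ G₁ G₂ : Set (E d))
    (hP : IsPolytope P) (hfull : affineSpan ℝ P = ⊤) (hc : 0 ∈ interior P)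
    (hF₁ : IsNontrivialFace P F₁) (hF₂ : IsNontrivialFace P F₂)
    (hG₁ : IsNontrivialFace P G₁) (hG₂ : IsNontrivialFace P G₂)
    (hGF₁ : G₁ ⊆ F₁) (hGF₂ : G₂ ⊆ F₂)
    (h₁ : IsFace (P + polarDual P) (G₁ + dualFace P F₁))
    (h₂ : IsFace (P + polarDual P) (G₂ + dualFace P F₂))
    (hne₁ : (G₁ + dualFace P F₁).Nonempty)
    (hne₂ : (G₂ + dualFace P F₂).Nonempty) :
    G₁ + dualFace P F₁ ⊆ G₂ + dualFace P F₂ ↔ G₁ ⊆ G₂ ∧ F₂ ⊆ F₁ := by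
  have hG₁P : G₁ ⊆ P := nontrivialFace_subset hG₁
  have hG₂P : G₂ ⊆ P := nontrivialFace_subset hG₂
  have hF₂P : F₂ ⊆ P := nontrivialFace_subset hF₂
  constructor
  · intro hsub
    -- the key pointwise step
    have key : ∀ g ∈ G₁, ∀ x ∈ dualFace P F₁, g ∈ G₂ ∧ x ∈ dualFace P F₂ := by
      intro g hg x hx
      have hmem : g + x ∈ G₂ + dualFace P F₂ := hsub (Set.add_mem_add hg hx)
      rw [Set.mem_add] at hmem
      obtain ⟨g', hg', x', hx', hsum⟩ := hmem
      have h1 : ⟪x, g⟫ = 1 := hx.2 g (hGF₁ hg)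
      have h2 : ⟪x', g'⟫ = 1 := hx'.2 g' (hGF₂ hg')
      have h3 : ⟪x, g'⟫ ≤ 1 := hx.1 g' (hG₂P hg')
      have h4 : ⟪x', g⟫ ≤ 1 := hx'.1 g (hG₁P hg)
      obtain ⟨hxe, hge⟩ := unique_decomp hsum h1 h2 h3 h4
      exact ⟨hge ▸ hg', hxe ▸ hx'⟩
    -- nonemptiness of G₁ and dualFace P F₁
    obtain ⟨z, hz⟩ := hne₁
    rw [Set.mem_add] at hz
    obtain ⟨g₀, hg₀, x₀, hx₀, -⟩ := hz
    have hGsub : G₁ ⊆ G₂ := fun g hg => (key g hg x₀ hx₀).1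
    have hDsub : dualFace P F₁ ⊆ dualFace P F₂ := fun x hx => (key g₀ hg₀ x hx).2
    refine ⟨hGsub, ?_⟩
    -- now show F₂ ⊆ F₁ using the canonical element c₁ / h₁ of dualFace P F₁
    obtain ⟨hfaceF₁, hF₁ne, hF₁nP⟩ := hF₁
    rcases hfaceF₁ with h | h | ⟨c₁, hc₁, hFeq⟩
    · exact absurd h hF₁ne
    · exact absurd h hF₁nP
    obtain ⟨f₁, hf₁⟩ := Set.nonempty_iff_ne_empty.mpr hF₁ne
    have hf₁' : f₁ ∈ maximizers P c₁ := hFeq ▸ hf₁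
    set h₁v : ℝ := ⟪f₁, c₁⟫ with hh₁v
    have hmax : ∀ y ∈ P, ⟪y, c₁⟫ ≤ h₁v := hf₁'.2
    -- h₁v > 0
    obtain ⟨ε, hε, hball⟩ := Metric.mem_nhds_iff.mp (mem_interior_iff_mem_nhds.mp hc)
    have hh₁pos : 0 < h₁v := by
      set t : ℝ := ε / (2 * ‖c₁‖) with ht
      have hcnorm : 0 < ‖c₁‖ := norm_pos_iff.mpr hc₁
      have htpos : 0 < t := div_pos hε (by positivity)
      have htc : t • c₁ ∈ P := by
        apply hball
        rw [Metric.mem_ball, dist_zero_right, norm_smul, Real.norm_eq_abs,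
          abs_of_pos htpos]
        have heq : t * ‖c₁‖ = ε / 2 := by
          rw [ht]; field_simp
        rw [heq]; linarith
      have := hmax _ htc
      rw [real_inner_smul_left, real_inner_self_eq_norm_sq] at this
      nlinarith [mul_pos htpos (pow_pos hcnorm 2)]
    -- the element h₁v⁻¹ • c₁ is in dualFace P F₁
    have hxstar : h₁v⁻¹ • c₁ ∈ dualFace P F₁ := by
      constructor
      · intro y hy
        rw [real_inner_smul_left]
        have := hmax y hy
        rw [real_inner_comm]
        calc h₁v⁻¹ * ⟪y, c₁⟫ ≤ h₁v⁻¹ * h₁v :=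
              mul_le_mul_of_nonneg_left this (by positivity)
          _ = 1 := inv_mul_cancel₀ (ne_of_gt hh₁pos)
      · intro f hf
        have hf' : f ∈ maximizers P c₁ := hFeq ▸ hf
        have hfc : ⟪f, c₁⟫ = h₁v :=
          le_antisymm (hmax f hf'.1) (hf'.2 f₁ hf₁'.1)
        rw [real_inner_smul_left, real_inner_comm, hfc,
          inv_mul_cancel₀ (ne_of_gt hh₁pos)]
    have hxstar₂ : h₁v⁻¹ • c₁ ∈ dualFace P F₂ := hDsub hxstar
    -- conclude F₂ ⊆ F₁
    intro f hf
    have hfP : f ∈ P := hF₂P hf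
    have hpair : ⟪h₁v⁻¹ • c₁, f⟫ = 1 := hxstar₂.2 f hf
    rw [real_inner_smul_left, real_inner_comm] at hpair
    have hfc : ⟪f, c₁⟫ = h₁v := by
      rw [inv_mul_eq_one₀ (ne_of_gt hh₁pos)] at hpair
      exact hpair.symm
    rw [hFeq]
    exact ⟨hfP, fun y hy => by rw [hfc]; exact hmax y hy⟩
  · rintro ⟨hg, hf⟩
    apply Set.add_subset_add hg
    intro x hx
    exact ⟨hx.1, fun f hf' => hx.2 f (hf hf')⟩
end
end
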